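/- With the setup of the cones $P$ and $C$ above (finite index set $\mathcal{A}$, vectors $g_i$, convex functions $\zeta_i$, closed convex $X$, point $\bar{x} \in X$), suppose additionally there exists $\bar{d} \in \mathcal{T}_X(\bar{x})$ such that $g_i^T \bar{d} + \zeta_i'(\bar{x}; \bar{d}) < 0$ for all $i \in \mathcal{A}$ (a pointwise Slater condition). Then the cone $P = \{ \sum_{i \in \mathcal{A}} \lambda_i (g_i + v_i) + w : \lambda_i \ge 0, \ v_i \in \partial \zeta_i(\bar{x}), \ w \in \mathcal{N}_X(\bar{x}) \}$ is closed, and consequently $P = C^{\circ}$ where $C = \{ d \in \mathcal{T}_X(\bar{x}) : g_i^T d + \zeta_i'(\bar{x}; d) \le 0, \ \forall i \in \mathcal{A} \}$. -/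

import Mathlib

open Set

variable {n : ℕ}

/-- Convex subdifferential of a finite convex function. -/
def subdiff (ζ : EuclideanSpace ℝ (Fin n) → ℝ) (x : EuclideanSpace ℝ (Fin n)) :
    Set (EuclideanSpace ℝ (Fin n)) :=
  {v | ∀ y, ζ x + (inner ℝ v (y - x) : ℝ) ≤ ζ y}

/-- Directional derivative of a convex function, as the support function of the
subdifferential: `ζ'(x; d) = max {⟨v, d⟩ : v ∈ ∂ζ(x)}`. -/
noncomputable def dirDerivSub (ζ : EuclideanSpace ℝ (Fin n) → ℝ)
    (x d : EuclideanSpace ℝ (Fin n)) : ℝ :=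
  sSup {r : ℝ | ∃ v ∈ subdiff ζ x, r = (inner ℝ v d : ℝ)}

/-- Normal cone of a convex set `X` at `x`. -/
def normalCone (X : Set (EuclideanSpace ℝ (Fin n))) (x : EuclideanSpace ℝ (Fin n)) :
    Set (EuclideanSpace ℝ (Fin n)) :=
  {v | ∀ y ∈ X, (inner ℝ v (y - x) : ℝ) ≤ 0}

/-- Tangent cone of a convex set `X` at `x`: closure of the cone of feasible directions. -/
def tangentConeConvex (X : Set (EuclideanSpace ℝ (Fin n))) (x : EuclideanSpace ℝ (Fin n)) :
    Set (EuclideanSpace ℝ (Fin n)) :=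
  closure {d | ∃ τ : ℝ, 0 ≤ τ ∧ ∃ y ∈ X, d = τ • (y - x)}

/-- Polar cone. -/
def polarCone (S : Set (EuclideanSpace ℝ (Fin n))) : Set (EuclideanSpace ℝ (Fin n)) :=
  {d | ∀ u ∈ S, (inner ℝ u d : ℝ) ≤ 0}

/-- The cone `P` of aggregated subgradients plus normal directions. -/
def Pcone {ι : Type} [Fintype ι] (g : ι → EuclideanSpace ℝ (Fin n))
    (ζ : ι → EuclideanSpace ℝ (Fin n) → ℝ) (X : Set (EuclideanSpace ℝ (Fin n)))
    (xbar : EuclideanSpace ℝ (Fin n)) : Set (EuclideanSpace ℝ (Fin n)) :=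
  {u | ∃ (lam : ι → ℝ) (v : ι → EuclideanSpace ℝ (Fin n)) (w : EuclideanSpace ℝ (Fin n)),
    (∀ i, 0 ≤ lam i) ∧ (∀ i, v i ∈ subdiff (ζ i) xbar) ∧ w ∈ normalCone X xbar ∧
    u = (∑ i, lam i • (g i + v i)) + w}

/-- The linearized cone `C`. -/
noncomputable def Ccone {ι : Type} [Fintype ι] (g : ι → EuclideanSpace ℝ (Fin n))
    (ζ : ι → EuclideanSpace ℝ (Fin n) → ℝ) (X : Set (EuclideanSpace ℝ (Fin n)))
    (xbar : EuclideanSpace ℝ (Fin n)) : Set (EuclideanSpace ℝ (Fin n)) :=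
  {d | d ∈ tangentConeConvex X xbar ∧
    ∀ i, (inner ℝ (g i) d : ℝ) + dirDerivSub (ζ i) xbar d ≤ 0}

/-!
Every vector of `P` is `∑ λᵢ (gᵢ + vᵢ) + w`; pairing it with the Slater direction `d̄` gives
`λᵢ cᵢ ≤ ‖u‖ ‖d̄‖`, where `cᵢ > 0` is the slack of the `i`-th Slater inequality. So on a ball the
multipliers are bounded, and since the subdifferentials are compact, `P ∩ B(0, R)` lies in a
compact subset of `P`; hence `P` is closed. Subdifferentials are convex, so `P` is a convex cone.
Testing `d` against the generators `gᵢ + v` and against `N_X(x̄) ⊆ P` shows `P° = C` (using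
`N_X(x̄)° = T_X(x̄)`, the bipolar theorem for the closed cone `T_X(x̄)`), and the bipolar theorem
for `P` gives `P = P°° = C°`.
-/
open Metric Pointwise
open scoped RealInnerProductSpace

local notation "E" => EuclideanSpace ℝ (Fin n)

section Subdifferential

lemma convex_subdiff (ζ : E → ℝ) (x : E) : Convex ℝ (subdiff ζ x) := by
  intro v hv v' hv' a b ha hb hab y
  rw [inner_add_left, real_inner_smul_left, real_inner_smul_left]
  linear_combination (exp := 1) a * hv y + b * hv' y + (ζ y - ζ x) * hab

lemma isClosed_subdiff (ζ : E → ℝ) (x : E) : IsClosed (subdiff ζ x) := by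
  simp only [subdiff, ofPred_forall]
  exact isClosed_iInter fun y => isClosed_le (by fun_prop) continuous_const

variable {ζ : EuclideanSpace ℝ (Fin n) → ℝ}

lemma subdiff_nonempty (hζ : ConvexOn ℝ univ ζ) (x : E) : (subdiff ζ x).Nonempty := by
  have hcont : Continuous ζ := continuousOn_univ.1 (hζ.continuousOn isOpen_univ)
  let A : Set (E × ℝ) := {p | ζ p.1 < p.2}
  have hA : Convex ℝ A := by simpa using hζ.convex_strict_epigraph
  obtain ⟨f, hf⟩ := geometric_hahn_banach_open_point hA (isOpen_lt (by fun_prop) continuous_snd)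
    (x := (x, ζ x)) (lt_irrefl (ζ x))
  let L : E →L[ℝ] ℝ := f.comp (.inl ℝ E ℝ)
  let c := f (0, 1)
  have hf_apply (y : E) (t : ℝ) : f (y, t) = L y + t * c := by
    rw [show ((y, t) : E × ℝ) = (y, 0) + t • (0, 1) by simp, map_add, map_smul, smul_eq_mul]
    rfl
  have hsep (y : E) (t : ℝ) (ht : ζ y < t) : L y + t * c < L x + ζ x * c := by
    simpa only [hf_apply] using hf (y, t) ht
  have hc : c < 0 := by linarith [hsep x (ζ x + 1) (by linarith)]
  -- the separation inequality survives the limit `t ↓ ζ y`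
  have hsupp (y : E) : L y + ζ y * c ≤ L x + ζ x * c := by
    have hcl : IsClosed {t : ℝ | L y + t * c ≤ L x + ζ x * c} :=
      isClosed_le (by fun_prop) continuous_const
    exact hcl.closure_subset_iff.2 (fun t ht => (hsep y t ht).le)
      (closure_Ioi (ζ y) ▸ self_mem_Ici)
  refine ⟨(InnerProductSpace.toDual ℝ E).symm ((-c)⁻¹ • L), fun y => ?_⟩
  rw [InnerProductSpace.toDual_symm_apply, smul_apply, smul_eq_mul, map_sub,
    ← le_sub_iff_add_le', inv_mul_le_iff₀ (neg_pos.2 hc)]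
  linarith [hsupp y]

lemma isCompact_subdiff (hζ : ConvexOn ℝ univ ζ) (x : E) : IsCompact (subdiff ζ x) := by
  have hcont : Continuous ζ := continuousOn_univ.1 (hζ.continuousOn isOpen_univ)
  obtain ⟨M, hM⟩ := (isCompact_closedBall x 1).bddAbove_image hcont.continuousOn
  have hball (y : E) (hy : y ∈ closedBall x 1) : ζ y ≤ M := hM (mem_image_of_mem ζ hy)
  refine (isCompact_closedBall 0 (M - ζ x)).of_isClosed_subset (isClosed_subdiff ζ x)
    fun v hv => mem_closedBall_zero_iff.2 ?_
  rcases eq_or_ne v 0 with rfl | hv0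
  · simpa using hball x (mem_closedBall_self zero_le_one)
  have hunit : x + ‖v‖⁻¹ • v ∈ closedBall x 1 := by
    simp [norm_smul, inv_mul_cancel₀ (norm_ne_zero_iff.2 hv0)]
  have hstep := hv (x + ‖v‖⁻¹ • v)
  rw [add_sub_cancel_left, real_inner_smul_right, real_inner_self_eq_norm_sq,
    sq, ← mul_assoc, inv_mul_cancel₀ (norm_ne_zero_iff.2 hv0), one_mul] at hstep
  linarith [hball _ hunit]

lemma inner_le_dirDerivSub (hζ : ConvexOn ℝ univ ζ) {x v : E} (hv : v ∈ subdiff ζ x) (d : E) :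
    ⟪v, d⟫ ≤ dirDerivSub ζ x d := by
  have hbdd := ((isCompact_subdiff hζ x).image (by fun_prop : Continuous (⟪·, d⟫))).bddAbove
  refine le_csSup (hbdd.mono ?_) ⟨v, hv, rfl⟩
  rintro _ ⟨w, hw, rfl⟩
  exact ⟨w, hw, rfl⟩

lemma dirDerivSub_le (hζ : ConvexOn ℝ univ ζ) {x d : E} {a : ℝ}
    (h : ∀ v ∈ subdiff ζ x, ⟪v, d⟫ ≤ a) : dirDerivSub ζ x d ≤ a := by
  obtain ⟨v, hv⟩ := subdiff_nonempty hζ x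
  refine csSup_le ⟨_, v, hv, rfl⟩ ?_
  rintro _ ⟨w, hw, rfl⟩
  exact h w hw

end Subdifferential

section Cones

lemma polarCone_closure (S : Set E) : polarCone (closure S) = polarCone S :=
  Subset.antisymm (fun _ hd u hu => hd u (subset_closure hu)) fun d hd _ hu =>
    closure_minimal (t := {u : E | ⟪u, d⟫ ≤ 0}) hd (isClosed_le (by fun_prop) continuous_const) hu

lemma polarCone_polarCone (K : ConvexCone ℝ E) (hne : (K : Set E).Nonempty)
    (hc : IsClosed (K : Set E)) : polarCone (polarCone (K : Set E)) = K := by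
  lift K to ProperCone ℝ E using ⟨hne, hc⟩
  refine Subset.antisymm (fun d hd => ?_) fun d hd u hu => real_inner_comm u d ▸ hu d hd
  by_contra hdK
  obtain ⟨y, hy, hyd⟩ := K.hyperplane_separation' hdK
  have hy' : -y ∈ polarCone (K : Set E) := fun u hu => by
    simpa [real_inner_comm] using hy u hu
  have := hd (-y) hy'
  rw [inner_neg_left, real_inner_comm] at this
  linarith

def feasibleDirections {X : Set E} (hX : Convex ℝ X) (x : E) : ConvexCone ℝ E where
  carrier := {d | ∃ τ : ℝ, 0 ≤ τ ∧ ∃ y ∈ X, d = τ • (y - x)}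
  smul_mem' := by
    rintro c hc _ ⟨τ, hτ, y, hy, rfl⟩
    exact ⟨c * τ, by positivity, y, hy, smul_smul c τ _⟩
  add_mem' := by
    rintro _ ⟨τ, hτ, y, hy, rfl⟩ _ ⟨τ', hτ', y', hy', rfl⟩
    obtain ⟨z, hz, hcomb⟩ := hX.exists_mem_add_smul_eq hy hy' hτ hτ'
    refine ⟨τ + τ', add_nonneg hτ hτ', z, hz, ?_⟩
    rw [smul_sub (τ + τ'), hcomb]
    module

variable {X : Set (EuclideanSpace ℝ (Fin n))} {x : EuclideanSpace ℝ (Fin n)}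

lemma normalCone_eq_polarCone : normalCone X x = polarCone (tangentConeConvex X x) := by
  rw [tangentConeConvex, polarCone_closure]
  ext w
  refine ⟨fun hw => ?_, fun hw y hy => ?_⟩
  · rintro _ ⟨τ, hτ, y, hy, rfl⟩
    rw [real_inner_smul_left, real_inner_comm]
    exact mul_nonpos_of_nonneg_of_nonpos hτ (hw y hy)
  · simpa [real_inner_comm] using hw (y - x) ⟨1, zero_le_one, y, hy, (one_smul ℝ _).symm⟩

lemma polarCone_normalCone (hX : Convex ℝ X) (hx : x ∈ X) :
    polarCone (normalCone X x) = tangentConeConvex X x := by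
  rw [normalCone_eq_polarCone]
  exact polarCone_polarCone (feasibleDirections hX x).closure
    ⟨0, subset_closure ⟨0, le_rfl, x, hx, by simp⟩⟩ isClosed_closure

lemma inner_nonpos_of_mem_normalCone {w d : E} (hw : w ∈ normalCone X x)
    (hd : d ∈ tangentConeConvex X x) : ⟪w, d⟫ ≤ 0 := by
  rw [normalCone_eq_polarCone] at hw
  exact real_inner_comm w d ▸ hw d hd

lemma isClosed_normalCone : IsClosed (normalCone X x) := by
  simp only [normalCone, ofPred_forall]
  exact isClosed_biInter fun y _ => isClosed_le (by fun_prop) continuous_const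

lemma zero_mem_normalCone : (0 : E) ∈ normalCone X x := fun y _ => by simp

lemma add_mem_normalCone {w w' : E} (hw : w ∈ normalCone X x) (hw' : w' ∈ normalCone X x) :
    w + w' ∈ normalCone X x := fun y hy => by
  rw [inner_add_left]
  exact add_nonpos (hw y hy) (hw' y hy)

lemma smul_mem_normalCone {c : ℝ} (hc : 0 ≤ c) {w : E} (hw : w ∈ normalCone X x) :
    c • w ∈ normalCone X x := fun y hy => by
  rw [real_inner_smul_left]
  exact mul_nonpos_of_nonneg_of_nonpos hc (hw y hy)

end Cones

lemma isClosed_of_inter_closedBall_subset_isCompact {F : Type*} [NormedAddCommGroup F]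
    {S : Set F} (h : ∀ R, ∃ K, IsCompact K ∧ S ∩ closedBall 0 R ⊆ K ∧ K ⊆ S) : IsClosed S := by
  refine isClosed_of_closure_subset fun u hu => ?_
  obtain ⟨K, hK, hSK, hKS⟩ := h (‖u‖ + 1)
  have hu' : u ∈ closure (ball 0 (‖u‖ + 1) ∩ S) :=
    isOpen_ball.inter_closure ⟨by simp, hu⟩
  exact hKS (closure_minimal (fun y hy => hSK ⟨hy.2, ball_subset_closedBall hy.1⟩) hK.isClosed hu')

section Pcone

def Pcone.toConvexCone {ι : Type} [Fintype ι] (g : ι → E) (ζ : ι → E → ℝ) (X : Set E) (x : E) :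
    ConvexCone ℝ E where
  carrier := Pcone g ζ X x
  smul_mem' := by
    rintro c hc _ ⟨lam, v, w, hlam, hv, hw, rfl⟩
    refine ⟨fun i => c * lam i, v, c • w, fun i => mul_nonneg hc.le (hlam i), hv,
      smul_mem_normalCone hc.le hw, ?_⟩
    simp only [smul_add, Finset.smul_sum, smul_smul]
  add_mem' := by
    rintro _ ⟨lam, v, w, hlam, hv, hw, rfl⟩ _ ⟨lam', v', w', hlam', hv', hw', rfl⟩
    choose r hr hcomb using fun i =>
      (convex_subdiff (ζ i) x).exists_mem_add_smul_eq (hv i) (hv' i) (hlam i) (hlam' i)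
    refine ⟨lam + lam', r, w + w', fun i => add_nonneg (hlam i) (hlam' i), hr,
      add_mem_normalCone hw hw', ?_⟩
    simp only [Pi.add_apply, smul_add _ (g _), hcomb, add_smul, Finset.sum_add_distrib]
    abel

variable {ι : Type} [Fintype ι] {g : ι → EuclideanSpace ℝ (Fin n)}
  {ζ : ι → EuclideanSpace ℝ (Fin n) → ℝ} {X : Set (EuclideanSpace ℝ (Fin n))}
  {x : EuclideanSpace ℝ (Fin n)}

lemma normalCone_subset_Pcone (hζ : ∀ i, ConvexOn ℝ univ (ζ i)) :
    normalCone X x ⊆ Pcone g ζ X x := fun w hw =>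
  ⟨0, fun i => (subdiff_nonempty (hζ i) x).some, w, fun _ => le_rfl,
    fun i => (subdiff_nonempty (hζ i) x).some_mem, hw, by simp⟩

lemma add_mem_Pcone (hζ : ∀ i, ConvexOn ℝ univ (ζ i)) [DecidableEq ι] {i : ι} {v : E}
    (hv : v ∈ subdiff (ζ i) x) : g i + v ∈ Pcone g ζ X x := by
  refine ⟨Pi.single i 1, Function.update (fun j => (subdiff_nonempty (hζ j) x).some) i v, 0,
    fun j => ?_, fun j => ?_, zero_mem_normalCone, ?_⟩
  · by_cases h : j = i <;> simp [h]
  · by_cases h : j = i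
    · subst h; simpa using hv
    · simpa [h] using (subdiff_nonempty (hζ j) x).some_mem
  · rw [add_zero, Fintype.sum_eq_single i fun j hj => by simp [hj]]
    simp

lemma inner_sum_smul_add_le (hζ : ∀ i, ConvexOn ℝ univ (ζ i)) {lam : ι → ℝ} {v : ι → E} {w d : E}
    (hlam : ∀ i, 0 ≤ lam i) (hv : ∀ i, v i ∈ subdiff (ζ i) x) (hw : w ∈ normalCone X x)
    (hd : d ∈ tangentConeConvex X x) :
    ⟪∑ i, lam i • (g i + v i) + w, d⟫ ≤ ∑ i, lam i * (⟪g i, d⟫ + dirDerivSub (ζ i) x d) :=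
  calc ⟪∑ i, lam i • (g i + v i) + w, d⟫
      = ∑ i, lam i * (⟪g i, d⟫ + ⟪v i, d⟫) + ⟪w, d⟫ := by
        simp only [inner_add_left, sum_inner, real_inner_smul_left]
    _ ≤ ∑ i, lam i * (⟪g i, d⟫ + dirDerivSub (ζ i) x d) + 0 := by
        gcongr with i
        · exact hlam i
        · exact inner_le_dirDerivSub (hζ i) (hv i) d
        · exact inner_nonpos_of_mem_normalCone hw hd
    _ = _ := add_zero _

lemma polarCone_Pcone (hζ : ∀ i, ConvexOn ℝ univ (ζ i)) (hX : Convex ℝ X) (hx : x ∈ X) :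
    polarCone (Pcone g ζ X x) = Ccone g ζ X x := by
  classical
  ext d
  refine ⟨fun hd => ⟨?_, fun i => ?_⟩, ?_⟩
  · rw [← polarCone_normalCone hX hx]
    exact fun w hw => hd w (normalCone_subset_Pcone hζ hw)
  · have h := dirDerivSub_le (hζ i) (a := -⟪g i, d⟫) fun v hv => by
      have := hd _ (add_mem_Pcone hζ hv)
      rw [inner_add_left] at this
      linarith
    linarith
  · rintro ⟨hdT, hdC⟩ _ ⟨lam, v, w, hlam, hv, hw, rfl⟩
    exact (inner_sum_smul_add_le hζ hlam hv hw hdT).trans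
      (Finset.sum_nonpos fun i _ => mul_nonpos_of_nonneg_of_nonpos (hlam i) (hdC i))

/-- `-(⟪g i, d⟫ + ζᵢ'(x; d)) > 0` is the slack of the `i`-th Slater inequality. -/
lemma mul_slack_le_norm_mul_norm (hζ : ∀ i, ConvexOn ℝ univ (ζ i)) {d : E}
    (hd : d ∈ tangentConeConvex X x) (hslater : ∀ i, ⟪g i, d⟫ + dirDerivSub (ζ i) x d < 0)
    {lam : ι → ℝ} {v : ι → E} {w : E} (hlam : ∀ i, 0 ≤ lam i)
    (hv : ∀ i, v i ∈ subdiff (ζ i) x) (hw : w ∈ normalCone X x) (i : ι) :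
    lam i * -(⟪g i, d⟫ + dirDerivSub (ζ i) x d) ≤ ‖∑ i, lam i • (g i + v i) + w‖ * ‖d‖ :=
  calc lam i * -(⟪g i, d⟫ + dirDerivSub (ζ i) x d)
      ≤ ∑ j, lam j * -(⟪g j, d⟫ + dirDerivSub (ζ j) x d) :=
        Finset.single_le_sum (f := fun j => lam j * -(⟪g j, d⟫ + dirDerivSub (ζ j) x d))
          (fun j _ => mul_nonneg (hlam j) (neg_nonneg.2 (hslater j).le)) (Finset.mem_univ i)
    _ = -∑ j, lam j * (⟪g j, d⟫ + dirDerivSub (ζ j) x d) := by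
        simp only [mul_neg, Finset.sum_neg_distrib]
    _ ≤ -⟪∑ i, lam i • (g i + v i) + w, d⟫ := neg_le_neg (inner_sum_smul_add_le hζ hlam hv hw hd)
    _ ≤ ‖∑ i, lam i • (g i + v i) + w‖ * ‖d‖ := (neg_le_abs _).trans (abs_real_inner_le_norm _ _)

lemma isClosed_Pcone (hζ : ∀ i, ConvexOn ℝ univ (ζ i))
    (hslater : ∃ d ∈ tangentConeConvex X x, ∀ i, ⟪g i, d⟫ + dirDerivSub (ζ i) x d < 0) :
    IsClosed (Pcone g ζ X x) := by
  obtain ⟨d, hd, hsl⟩ := hslater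
  refine isClosed_of_inter_closedBall_subset_isCompact fun R => ?_
  let c (i : ι) := -(⟪g i, d⟫ + dirDerivSub (ζ i) x d)
  let G : (ι → ℝ) × (ι → E) → E := fun p => ∑ i, p.1 i • (g i + p.2 i)
  let A := G '' ((univ.pi fun i => Icc 0 (R * ‖d‖ / c i)) ×ˢ univ.pi fun i => subdiff (ζ i) x)
  have hA : IsCompact A := ((isCompact_univ_pi fun _ => isCompact_Icc).prod
    (isCompact_univ_pi fun i => isCompact_subdiff (hζ i) x)).image (by fun_prop)
  have hW : IsCompact (closedBall 0 R - A) := by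
    rw [sub_eq_add_neg]
    exact (isCompact_closedBall 0 R).add hA.neg
  refine ⟨A + normalCone X x ∩ (closedBall 0 R - A),
    hA.add (hW.inter_left isClosed_normalCone), ?_, ?_⟩
  · rintro _ ⟨⟨lam, v, w, hlam, hv, hw, rfl⟩, hR⟩
    have hbound (i : ι) : lam i ≤ R * ‖d‖ / c i := by
      rw [le_div_iff₀ (neg_pos.2 (hsl i))]
      exact (mul_slack_le_norm_mul_norm hζ hd hsl hlam hv hw i).trans
        (mul_le_mul_of_nonneg_right (mem_closedBall_zero_iff.1 hR) (norm_nonneg d))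
    have hGA : G (lam, v) ∈ A := ⟨(lam, v), ⟨fun i _ => ⟨hlam i, hbound i⟩, fun i _ => hv i⟩, rfl⟩
    exact ⟨G (lam, v), hGA, w, ⟨hw, _, hR, _, hGA, add_sub_cancel_left _ _⟩, rfl⟩
  · rintro _ ⟨_, ⟨⟨lam, v⟩, ⟨hlam, hv⟩, rfl⟩, w, ⟨hw, -⟩, rfl⟩
    exact ⟨lam, v, w, fun i => (hlam i trivial).1, fun i => hv i trivial, hw, rfl⟩

end Pcone

theorem Pcone_closed_and_eq_polar_Ccone_general {n : ℕ} {ι : Type} [Fintype ι]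
    (X : Set (EuclideanSpace ℝ (Fin n))) (hXconv : Convex ℝ X)
    (xbar : EuclideanSpace ℝ (Fin n)) (hxbar : xbar ∈ X)
    (g : ι → EuclideanSpace ℝ (Fin n)) (ζ : ι → EuclideanSpace ℝ (Fin n) → ℝ)
    (hζ : ∀ i, ConvexOn ℝ Set.univ (ζ i))
    (hslater : ∃ dbar ∈ tangentConeConvex X xbar,
      ∀ i, (inner ℝ (g i) dbar : ℝ) + dirDerivSub (ζ i) xbar dbar < 0) :
    IsClosed (Pcone g ζ X xbar) ∧ Pcone g ζ X xbar = polarCone (Ccone g ζ X xbar) := by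
  have hP : IsClosed (Pcone g ζ X xbar) := isClosed_Pcone hζ hslater
  refine ⟨hP, ?_⟩
  rw [← polarCone_Pcone hζ hXconv hxbar]
  exact (polarCone_polarCone (Pcone.toConvexCone g ζ X xbar)
    ⟨0, normalCone_subset_Pcone hζ zero_mem_normalCone⟩ hP).symm

/-- Under a pointwise Slater condition, the cone `P` is closed and `P = C°`. -/
theorem Pcone_closed_and_eq_polar_Ccone {n : ℕ} {ι : Type} [Fintype ι]
    (X : Set (EuclideanSpace ℝ (Fin n))) (hXc : IsClosed X) (hXconv : Convex ℝ X)
    (xbar : EuclideanSpace ℝ (Fin n)) (hxbar : xbar ∈ X)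
    (g : ι → EuclideanSpace ℝ (Fin n)) (ζ : ι → EuclideanSpace ℝ (Fin n) → ℝ)
    (hζ : ∀ i, ConvexOn ℝ Set.univ (ζ i))
    (hslater : ∃ dbar ∈ tangentConeConvex X xbar,
      ∀ i, (inner ℝ (g i) dbar : ℝ) + dirDerivSub (ζ i) xbar dbar < 0) :
    IsClosed (Pcone g ζ X xbar) ∧ Pcone g ζ X xbar = polarCone (Ccone g ζ X xbar) :=
  Pcone_closed_and_eq_polar_Ccone_general X hXconv xbar hxbar g ζ hζ hslater
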